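/- arXiv:2310.14582 — 7 statements merged into one kernel-verified Lean document; each statement's English description precedes it below -/
import Mathlib

section
/- Let A₁ ⊆ A be a subalgebra with 1_B ∈ A₁ and F₁ ⊆ F a subalgebra such that the pair (A₁, F₁) is cyclic-antimonotone independent and A₁ F₁ A₁ ⊆ F₁ (i.e. a f a′ ∈ F₁ for all a, a′ ∈ A₁ and f ∈ F₁). Then either φ(a a′) = φ(a) φ(a′) for all a, a′ ∈ A₁, or Φ(f) = 0 for all f ∈ F₁. (So, except in these degenerate cases, a pair (A₁, F₁) with F₁ closed under the A₁-action cannot be cyclic-antimonotone independent.) -/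
open scoped BigOperators

namespace TypeBPrime

variable {B : Type*} [Ring B] [Algebra ℂ B]

/-- The alternating word `a 0 * (f 0 * a 1) * ⋯ * (f (n-1) * a n)`. -/
def altWord {n : ℕ} (a : Fin (n + 1) → B) (f : Fin n → B) : B :=
  a 0 * (List.ofFn fun k : Fin n => f k * a k.succ).prod

/-- Cyclic-antimonotone independence of the pair `(A₁, F₁)` with respect to `(φ, Φ)`:
`Φ(a₀ f₁ a₁ ⋯ fₙ aₙ) = φ(a₀ aₙ) · φ(a₁) ⋯ φ(a_{n-1}) · Φ(f₁ ⋯ fₙ)` for all `n ≥ 1`. -/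
def CyclicAntimonotone (φ Φ : B → ℂ) (A₁ F₁ : Set B) : Prop :=
  ∀ n : ℕ, 0 < n → ∀ (a : Fin (n + 1) → B) (f : Fin n → B),
    (∀ k, a k ∈ A₁) → (∀ k, f k ∈ F₁) →
    Φ (altWord a f) =
      φ (a 0 * a (Fin.last n)) *
        (∏ k ∈ Finset.Ioo (0 : Fin (n + 1)) (Fin.last n), φ (a k)) *
        Φ (List.ofFn f).prod

/-- Freeness of a family of subsets with respect to `φ`:
alternating words in centered elements are centered. -/
def IsFreeFamily {ι : Type*} (φ : B → ℂ) (Alg : ι → Set B) : Prop :=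
  ∀ (n : ℕ) (idx : Fin (n + 1) → ι) (a : Fin (n + 1) → B),
    (∀ k : Fin n, idx k.castSucc ≠ idx k.succ) →
    (∀ k, a k ∈ Alg (idx k)) → (∀ k, φ (a k) = 0) →
    φ (List.ofFn a).prod = 0

/-- Infinitesimal freeness of a family of subsets with respect to `(φ, φ')`. -/
def IsInfFree {ι : Type*} (φ φ' : B → ℂ) (Alg : ι → Set B) : Prop :=
  IsFreeFamily φ Alg ∧
  (∀ (n : ℕ) (idx : Fin (n + 1) → ι) (b : Fin (n + 1) → B),
    (∀ k : Fin n, idx k.castSucc ≠ idx k.succ) →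
    (∀ k, b k ∈ Alg (idx k)) → (∀ k, φ (b k) = 0) →
    ¬(Even n ∧ ∀ k, idx k = idx k.rev) →
    φ' (List.ofFn b).prod = 0) ∧
  (∀ (m : ℕ) (idx : Fin (2 * m + 1) → ι) (b : Fin (2 * m + 1) → B),
    (∀ k : Fin (2 * m), idx k.castSucc ≠ idx k.succ) →
    (∀ k, b k ∈ Alg (idx k)) → (∀ k, φ (b k) = 0) →
    (∀ k, idx k = idx k.rev) →
    φ' (List.ofFn b).prod =
      (∏ j : Fin m,
          φ (b (Fin.castLE (by omega) j) * b (Fin.castLE (by omega) j).rev)) *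
        φ' (b ⟨m, by omega⟩))

/-- Trivial independence with respect to `Φ`: alternating words of length `≥ 2` vanish. -/
def TrivIndep {ι : Type*} (Φ : B → ℂ) (Fj : ι → Set B) : Prop :=
  ∀ (n : ℕ) (idx : Fin (n + 2) → ι) (f : Fin (n + 2) → B),
    (∀ k : Fin (n + 1), idx k.castSucc ≠ idx k.succ) →
    (∀ k, f k ∈ Fj (idx k)) →
    Φ (List.ofFn f).prod = 0

/-- Boolean independence with respect to `ψ`. -/
def BoolIndep {ι : Type*} (ψ : B → ℂ) (C : ι → Set B) : Prop :=
  ∀ (n : ℕ) (idx : Fin (n + 1) → ι) (c : Fin (n + 1) → B),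
    (∀ k : Fin n, idx k.castSucc ≠ idx k.succ) →
    (∀ k, c k ∈ C (idx k)) →
    ψ (List.ofFn c).prod = ∏ k, ψ (c k)

/-- Conditional freeness with respect to `(φ, ψ)`. -/
def CFree {ι : Type*} (φ ψ : B → ℂ) (Alg : ι → Set B) : Prop :=
  IsFreeFamily φ Alg ∧
  ∀ (n : ℕ) (idx : Fin (n + 1) → ι) (b : Fin (n + 1) → B),
    (∀ k : Fin n, idx k.castSucc ≠ idx k.succ) →
    (∀ k, b k ∈ Alg (idx k)) → (∀ k, φ (b k) = 0) →
    ψ (List.ofFn b).prod = ∏ k, ψ (b k)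

/-- The unital subspace `ℂ·1_B + F₁`. -/
def unitize (F₁ : Set B) : Set B :=
  {x | ∃ c : ℂ, ∃ f ∈ F₁, x = algebraMap ℂ B c + f}

/-- The set of alternating words `a₀ f₁ a₁ ⋯ fₙ aₙ` with letters from `A₁` and `F₁`. -/
def wordSet (A₁ F₁ : Set B) : Set B :=
  {x | ∃ n : ℕ, 0 < n ∧ ∃ (a : Fin (n + 1) → B) (f : Fin n → B),
    (∀ k, a k ∈ A₁) ∧ (∀ k, f k ∈ F₁) ∧ x = altWord a f}

/-- `A₁⟨F₁⟩₀`: the linear span of all alternating words `a₀ f₁ a₁ ⋯ fₙ aₙ`. -/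
def wordSpan (A₁ F₁ : Set B) : Set B :=
  (Submodule.span ℂ (wordSet A₁ F₁) : Submodule ℂ B)

/-- The type B′ subalgebra `A₁⟨F₁⟩ = A₁ + A₁⟨F₁⟩₀`. -/
def typeBSub (A₁ F₁ : Set B) : Set B :=
  {x | ∃ a ∈ A₁, ∃ f ∈ wordSpan A₁ F₁, x = a + f}

/-- `(tₙ)` is the inverse Markov–Krein transform of the sequence `(mₙ)`:
`(n+1)·mₙ = Σ_{j=0}^{n} tⱼ m_{n−j}` for all `n ≥ 0`. -/
def IsInvMK (m t : ℕ → ℂ) : Prop :=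
  ∀ n : ℕ, ((n : ℂ) + 1) * m n = ∑ j ∈ Finset.range (n + 1), t j * m (n - j)

/-!
Right multiplication by `A₁` acts on `Φ|F₁` through `φ`: the length-one case of cyclic-antimonotone
independence with `a₀ = 1` reads `Φ(f a) = φ(a) Φ(f)`. If moreover `F₁ A₁ ⊆ F₁`, then `Φ(f a a')`
can be evaluated both as `Φ((f a) a') = φ(a') φ(a) Φ(f)` and as `Φ(f (a a')) = φ(a a') Φ(f)`, so
`φ` is multiplicative on `A₁` as soon as `Φ(f) ≠ 0` for a single `f ∈ F₁`.
-/

section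

variable {B : Type*} [Ring B] {φ Φ : B → ℂ} {F₁ : Set B}

theorem altWord_two (a₀ a₁ f : B) : altWord ![a₀, a₁] ![f] = a₀ * f * a₁ := by
  simp [altWord, List.ofFn_succ, mul_assoc]

theorem CyclicAntimonotone.apply_mul_mul {A₁ : Set B} (h : CyclicAntimonotone φ Φ A₁ F₁)
    {a₀ f a₁ : B} (ha₀ : a₀ ∈ A₁) (hf : f ∈ F₁) (ha₁ : a₁ ∈ A₁) :
    Φ (a₀ * f * a₁) = φ (a₀ * a₁) * Φ f := by
  have hIoo : Finset.Ioo (0 : Fin 2) (Fin.last 1) = ∅ := by decide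
  have := h 1 one_pos ![a₀, a₁] ![f] (fun k => by fin_cases k <;> assumption)
    (fun k => by fin_cases k; exact hf)
  rw [altWord_two, hIoo] at this
  simpa using this

theorem CyclicAntimonotone.apply_mul_right {A₁ : Set B} (h : CyclicAntimonotone φ Φ A₁ F₁)
    (h1 : (1 : B) ∈ A₁) {f a : B} (hf : f ∈ F₁) (ha : a ∈ A₁) :
    Φ (f * a) = φ a * Φ f := by
  simpa using h.apply_mul_mul h1 hf ha

theorem CyclicAntimonotone.map_mul_of_apply_ne_zero {A₁ : Submonoid B}
    (h : CyclicAntimonotone φ Φ A₁ F₁) (hright : ∀ f ∈ F₁, ∀ a ∈ A₁, f * a ∈ F₁)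
    {f : B} (hf : f ∈ F₁) (hΦf : Φ f ≠ 0) {a a' : B} (ha : a ∈ A₁) (ha' : a' ∈ A₁) :
    φ (a * a') = φ a * φ a' := by
  have h1 : (1 : B) ∈ (A₁ : Set B) := A₁.one_mem
  refine mul_right_cancel₀ hΦf ?_
  calc φ (a * a') * Φ f = Φ (f * a * a') := by
        rw [mul_assoc, h.apply_mul_right h1 hf (A₁.mul_mem ha ha')]
    _ = φ a * φ a' * Φ f := by
        rw [h.apply_mul_right h1 (hright f hf a ha) ha', h.apply_mul_right h1 hf ha]; ring

end

theorem statement0_general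
    {B : Type*} [Ring B] [Algebra ℂ B]
    (φ Φ : B →ₗ[ℂ] ℂ)
    (A₁ : Subalgebra ℂ B)
    (F₁ : NonUnitalSubalgebra ℂ B)
    (hcam : CyclicAntimonotone ⇑φ ⇑Φ (A₁ : Set B) (F₁ : Set B))
    (hclosed : ∀ a ∈ A₁, ∀ f ∈ F₁, ∀ a' ∈ A₁, a * f * a' ∈ F₁) :
    (∀ a ∈ A₁, ∀ a' ∈ A₁, φ (a * a') = φ a * φ a') ∨ (∀ f ∈ F₁, Φ f = 0) := by
  refine or_iff_not_imp_right.2 fun hΦ => ?_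
  obtain ⟨f, hf, hΦf⟩ := not_forall₂.1 hΦ
  have hright : ∀ g ∈ (F₁ : Set B), ∀ a ∈ A₁.toSubmonoid, g * a ∈ (F₁ : Set B) :=
    fun g hg a ha => by simpa using hclosed 1 A₁.one_mem g hg a ha
  exact fun a ha a' ha' => hcam.map_mul_of_apply_ne_zero hright hf hΦf ha ha'

theorem statement0
    {B : Type*} [Ring B] [Algebra ℂ B]
    (A : Subalgebra ℂ B) (F : Submodule ℂ B)
    (hFmulL : ∀ b : B, ∀ f ∈ F, b * f ∈ F)
    (hFmulR : ∀ b : B, ∀ f ∈ F, f * b ∈ F)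
    (hAF : ∀ x ∈ A, x ∈ F → x = 0)
    (hdec : ∀ x : B, ∃ a ∈ A, ∃ f ∈ F, x = a + f)
    (φ Φ : B →ₗ[ℂ] ℂ)
    (hφ1 : φ 1 = 1) (hφF : ∀ f ∈ F, φ f = 0)
    (A₁ : Subalgebra ℂ B) (hA₁A : A₁ ≤ A)
    (F₁ : NonUnitalSubalgebra ℂ B) (hF₁F : ∀ f ∈ F₁, f ∈ F)
    (hcam : CyclicAntimonotone ⇑φ ⇑Φ (A₁ : Set B) (F₁ : Set B))
    (hclosed : ∀ a ∈ A₁, ∀ f ∈ F₁, ∀ a' ∈ A₁, a * f * a' ∈ F₁) :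
    (∀ a ∈ A₁, ∀ a' ∈ A₁, φ (a * a') = φ a * φ a') ∨ (∀ f ∈ F₁, Φ f = 0) :=
  statement0_general φ Φ A₁ F₁ hcam hclosed

end TypeBPrime
end

section
/- Let A₁ ⊆ A be a subalgebra with 1_B ∈ A₁ and F₁ ⊆ F a subalgebra such that the pair (A₁, F₁) is cyclic-antimonotone independent. Suppose Φ(x y) = Φ(y x) for all x, y ∈ F, and suppose there exists f ∈ F₁ with Φ(f²) ≠ 0. Then φ is tracial on A₁, i.e. φ(a₁ a₂) = φ(a₂ a₁) for all a₁, a₂ ∈ A₁. -/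
open scoped BigOperators

namespace TypeBPrime

variable {B : Type*} [Ring B] [Algebra ℂ B]

/-! Cyclic-antimonotone independence evaluates both `Φ(f a₁a₂ f)` and `Φ(a₂ f² a₁)` as
`φ(·) Φ(f²)`, with `a₁a₂` resp. `a₂a₁` inside `φ`. Since `f a₁` and `a₂ f` lie in the ideal `F`,
traciality of `Φ` on `F` makes the two words have the same `Φ`-value; cancel `Φ(f²) ≠ 0`. -/

namespace CyclicAntimonotone

variable {B : Type*} [Ring B] {φ Φ : B → ℂ} {A₁ F₁ : Set B}

theorem apply_one (h : CyclicAntimonotone φ Φ A₁ F₁) {a₀ a₁ f : B}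
    (ha₀ : a₀ ∈ A₁) (ha₁ : a₁ ∈ A₁) (hf : f ∈ F₁) :
    Φ (a₀ * f * a₁) = φ (a₀ * a₁) * Φ f := by
  have hIoo : Finset.Ioo (0 : Fin 2) (Fin.last 1) = ∅ := by decide
  have key := h 1 one_pos ![a₀, a₁] ![f]
  rw [hIoo] at key
  simpa [altWord, Fin.forall_fin_two, ha₀, ha₁, hf, mul_assoc] using key

theorem apply_two (h : CyclicAntimonotone φ Φ A₁ F₁) {a₀ a₁ a₂ f₁ f₂ : B}
    (ha₀ : a₀ ∈ A₁) (ha₁ : a₁ ∈ A₁) (ha₂ : a₂ ∈ A₁) (hf₁ : f₁ ∈ F₁) (hf₂ : f₂ ∈ F₁) :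
    Φ (a₀ * f₁ * a₁ * f₂ * a₂) = φ (a₀ * a₂) * φ a₁ * Φ (f₁ * f₂) := by
  have hIoo : Finset.Ioo (0 : Fin 3) (Fin.last 2) = {1} := by decide
  have key := h 2 two_pos ![a₀, a₁, a₂] ![f₁, f₂]
  rw [hIoo] at key
  simpa [altWord, List.ofFn_succ, Fin.forall_fin_succ, ha₀, ha₁, ha₂, hf₁, hf₂, mul_assoc]
    using key

theorem apply_sandwich (h : CyclicAntimonotone φ Φ A₁ F₁) (hφ1 : φ 1 = 1) (hA₁ : (1 : B) ∈ A₁)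
    {a f₁ f₂ : B} (ha : a ∈ A₁) (hf₁ : f₁ ∈ F₁) (hf₂ : f₂ ∈ F₁) :
    Φ (f₁ * a * f₂) = φ a * Φ (f₁ * f₂) := by
  simpa [hφ1] using h.apply_two hA₁ ha hA₁ hf₁ hf₂

end CyclicAntimonotone

theorem statement1_general
    {B : Type*} [Ring B] [Algebra ℂ B]
    (F : Submodule ℂ B)
    (hFmulL : ∀ b : B, ∀ f ∈ F, b * f ∈ F)
    (hFmulR : ∀ b : B, ∀ f ∈ F, f * b ∈ F)
    (φ Φ : B →ₗ[ℂ] ℂ)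
    (hφ1 : φ 1 = 1)
    (A₁ : Subalgebra ℂ B)
    (F₁ : NonUnitalSubalgebra ℂ B) (hF₁F : ∀ f ∈ F₁, f ∈ F)
    (hcam : CyclicAntimonotone ⇑φ ⇑Φ (A₁ : Set B) (F₁ : Set B))
    (hΦtr : ∀ x ∈ F, ∀ y ∈ F, Φ (x * y) = Φ (y * x))
    (hex : ∃ f ∈ F₁, Φ (f * f) ≠ 0) :
    ∀ a₁ ∈ A₁, ∀ a₂ ∈ A₁, φ (a₁ * a₂) = φ (a₂ * a₁) := by
  obtain ⟨f, hf, hff⟩ := hex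
  intro a₁ ha₁ a₂ ha₂
  have hfF : f ∈ F := hF₁F f hf
  have hsandwich : Φ (f * (a₁ * a₂) * f) = φ (a₁ * a₂) * Φ (f * f) :=
    hcam.apply_sandwich hφ1 A₁.one_mem (A₁.mul_mem ha₁ ha₂) hf hf
  have hsquare : Φ (a₂ * (f * f) * a₁) = φ (a₂ * a₁) * Φ (f * f) :=
    hcam.apply_one ha₂ ha₁ (F₁.mul_mem hf hf)
  have hcyclic : Φ (f * (a₁ * a₂) * f) = Φ (a₂ * (f * f) * a₁) := by
    simpa only [mul_assoc] using hΦtr _ (hFmulR a₁ f hfF) _ (hFmulL a₂ f hfF)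
  exact mul_right_cancel₀ hff (hsandwich.symm.trans (hcyclic.trans hsquare))

theorem statement1
    {B : Type*} [Ring B] [Algebra ℂ B]
    (A : Subalgebra ℂ B) (F : Submodule ℂ B)
    (hFmulL : ∀ b : B, ∀ f ∈ F, b * f ∈ F)
    (hFmulR : ∀ b : B, ∀ f ∈ F, f * b ∈ F)
    (hAF : ∀ x ∈ A, x ∈ F → x = 0)
    (hdec : ∀ x : B, ∃ a ∈ A, ∃ f ∈ F, x = a + f)
    (φ Φ : B →ₗ[ℂ] ℂ)
    (hφ1 : φ 1 = 1) (hφF : ∀ f ∈ F, φ f = 0)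
    (A₁ : Subalgebra ℂ B) (hA₁A : A₁ ≤ A)
    (F₁ : NonUnitalSubalgebra ℂ B) (hF₁F : ∀ f ∈ F₁, f ∈ F)
    (hcam : CyclicAntimonotone ⇑φ ⇑Φ (A₁ : Set B) (F₁ : Set B))
    (hΦtr : ∀ x ∈ F, ∀ y ∈ F, Φ (x * y) = Φ (y * x))
    (hex : ∃ f ∈ F₁, Φ (f * f) ≠ 0) :
    ∀ a₁ ∈ A₁, ∀ a₂ ∈ A₁, φ (a₁ * a₂) = φ (a₂ * a₁) :=
  statement1_general F hFmulL hFmulR φ Φ hφ1 A₁ F₁ hF₁F hcam hΦtr hex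

end TypeBPrime
end

section
/- Subalgebras (F_j)_{j∈J} of F are trivially independent with respect to Φ if and only if the unital subalgebras (ℂ·1_B + F_j)_{j∈J} of B are infinitesimally free with respect to (φ, φ′). -/
open scoped BigOperators

namespace TypeBPrime

variable {B : Type*} [Ring B] [Algebra ℂ B]

/-! Since `φ 1 = 1` and `φ` kills `F`, the `φ`-centered elements of `ℂ·1 + F_j` are exactly
the elements of `F_j`. An alternating word in such letters lies in the ideal `F`, so `φ` kills
it (freeness is automatic) and `φ'` agrees with `Φ` on it. In the palindromic formula for `φ'`
the outermost factor `φ (b₀ b_{2m})` also vanishes once `m ≥ 1`, so infinitesimal freeness says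
exactly that `Φ` kills alternating words of length `≥ 2`, which is trivial independence. -/

theorem mem_unitize_of_mem {S : Set B} {f : B} (hf : f ∈ S) : f ∈ unitize S :=
  ⟨0, f, hf, by simp⟩

theorem mem_of_mem_unitize_of_apply_eq_zero {φ : B →ₗ[ℂ] ℂ} (hφ1 : φ 1 = 1)
    {S : Set B} (hφS : ∀ f ∈ S, φ f = 0) {b : B} (hb : b ∈ unitize S) (hφb : φ b = 0) :
    b ∈ S := by
  obtain ⟨c, f, hf, rfl⟩ := hb
  have hc : c = 0 := by
    simpa [Algebra.algebraMap_eq_smul_one, hφ1, hφS f hf] using hφb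
  simpa [hc] using hf

theorem prod_ofFn_mem_of_head_mem {M : Type*} [Monoid M] {F : Set M}
    (hFmulR : ∀ b : M, ∀ f ∈ F, f * b ∈ F) {n : ℕ} {g : Fin (n + 1) → M} (h0 : g 0 ∈ F) :
    (List.ofFn g).prod ∈ F := by
  rw [List.ofFn_succ, List.prod_cons]
  exact hFmulR _ _ h0

theorem prod_apply_mul_rev_eq_zero {R : Type*} [Mul R] {F : Set R}
    (hFmulR : ∀ b : R, ∀ f ∈ F, f * b ∈ F) {φ : R → ℂ} (hφF : ∀ f ∈ F, φ f = 0) {m : ℕ}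
    {b : Fin (2 * (m + 1) + 1) → R} (h0 : b 0 ∈ F) :
    ∏ j : Fin (m + 1),
      φ (b (Fin.castLE (by omega) j) * b (Fin.castLE (by omega) j).rev) = 0 :=
  Finset.prod_eq_zero (Finset.mem_univ 0) (hφF _ (hFmulR _ _ h0))

section Unitization

variable {F : Set B} {φ : B →ₗ[ℂ] ℂ} {Φ φ' : B → ℂ} {κ : Type*} {Fj : κ → Set B}

theorem isInfFree_unitize_of_trivIndep (hFmulR : ∀ b : B, ∀ f ∈ F, f * b ∈ F)
    (hφ1 : φ 1 = 1) (hφF : ∀ f ∈ F, φ f = 0) (hφ'F : ∀ f ∈ F, φ' f = Φ f)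
    (hFj : ∀ j, Fj j ⊆ F) (hT : TrivIndep Φ Fj) :
    IsInfFree φ φ' fun j => unitize (Fj j) := by
  have hletter : ∀ {n : ℕ} {idx : Fin n → κ} {b : Fin n → B},
      (∀ k, b k ∈ unitize (Fj (idx k))) → (∀ k, φ (b k) = 0) →
      ∀ k, b k ∈ Fj (idx k) :=
    fun hb hc k => mem_of_mem_unitize_of_apply_eq_zero hφ1
      (fun f hf => hφF f (hFj _ hf)) (hb k) (hc k)
  refine ⟨?free, ?vanish, ?palindrome⟩
  case free =>
    intro n idx b _ hb hc
    exact hφF _ (prod_ofFn_mem_of_head_mem hFmulR (hFj _ (hletter hb hc 0)))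
  case vanish =>
    rintro (_ | n) idx b halt hb hc hnot
    · exact absurd ⟨Even.zero, fun _ => congrArg idx (Subsingleton.elim (α := Fin 1) _ _)⟩
        hnot
    · rw [hφ'F _ (prod_ofFn_mem_of_head_mem hFmulR (hFj _ (hletter hb hc 0)))]
      exact hT n idx b halt (hletter hb hc)
  case palindrome =>
    rintro (_ | m) idx b halt hb hc -
    · simp
    · rw [hφ'F _ (prod_ofFn_mem_of_head_mem hFmulR (hFj _ (hletter hb hc 0))),
        hT (2 * m + 1) idx b halt (hletter hb hc),
        prod_apply_mul_rev_eq_zero hFmulR hφF (hFj _ (hletter hb hc 0)), zero_mul]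

theorem trivIndep_of_isInfFree_unitize (hFmulR : ∀ b : B, ∀ f ∈ F, f * b ∈ F)
    (hφF : ∀ f ∈ F, φ f = 0) (hφ'F : ∀ f ∈ F, φ' f = Φ f) (hFj : ∀ j, Fj j ⊆ F)
    (hfree : IsInfFree φ φ' fun j => unitize (Fj j)) : TrivIndep Φ Fj := by
  obtain ⟨-, hvanish, hpalindrome⟩ := hfree
  intro n idx f halt hf
  have hfF : ∀ k, f k ∈ F := fun k => hFj _ (hf k)
  have hc : ∀ k, φ (f k) = 0 := fun k => hφF _ (hfF k)
  have hu : ∀ k, f k ∈ unitize (Fj (idx k)) := fun k => mem_unitize_of_mem (hf k)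
  rw [← hφ'F _ (prod_ofFn_mem_of_head_mem hFmulR (hfF 0))]
  by_cases hpal : Even (n + 1) ∧ ∀ k, idx k = idx k.rev
  · obtain ⟨m, rfl⟩ : Odd n := Nat.not_even_iff_odd.mp (Nat.even_add_one.mp hpal.1)
    rw [hpalindrome (m + 1) idx f halt hu hc hpal.2,
      prod_apply_mul_rev_eq_zero hFmulR hφF (hfF 0), zero_mul]
  · exact hvanish (n + 1) idx f halt hu hc hpal

end Unitization

theorem statement6_general
    {B : Type*} [Ring B] [Algebra ℂ B]
    (F : Submodule ℂ B)
    (hFmulR : ∀ b : B, ∀ f ∈ F, f * b ∈ F)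
    (φ Φ φ' : B →ₗ[ℂ] ℂ)
    (hφ1 : φ 1 = 1) (hφF : ∀ f ∈ F, φ f = 0)
    (hφ'F : ∀ f ∈ F, φ' f = Φ f)
    {κ : Type*}
    (Fj : κ → NonUnitalSubalgebra ℂ B) (hFj : ∀ j, ∀ f ∈ Fj j, f ∈ F) :
    TrivIndep ⇑Φ (fun j => (Fj j : Set B)) ↔
      IsInfFree ⇑φ ⇑φ' (fun j => unitize (Fj j : Set B)) :=
  ⟨isInfFree_unitize_of_trivIndep hFmulR hφ1 hφF hφ'F hFj,
    trivIndep_of_isInfFree_unitize hFmulR hφF hφ'F hFj⟩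

theorem statement6
    {B : Type*} [Ring B] [Algebra ℂ B]
    (A : Subalgebra ℂ B) (F : Submodule ℂ B)
    (hFmulL : ∀ b : B, ∀ f ∈ F, b * f ∈ F)
    (hFmulR : ∀ b : B, ∀ f ∈ F, f * b ∈ F)
    (hAF : ∀ x ∈ A, x ∈ F → x = 0)
    (hdec : ∀ x : B, ∃ a ∈ A, ∃ f ∈ F, x = a + f)
    (φ Φ φ' : B →ₗ[ℂ] ℂ)
    (hφ1 : φ 1 = 1) (hφF : ∀ f ∈ F, φ f = 0)
    (hφ'A : ∀ a ∈ A, φ' a = 0) (hφ'F : ∀ f ∈ F, φ' f = Φ f)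
    {κ : Type*}
    (Fj : κ → NonUnitalSubalgebra ℂ B) (hFj : ∀ j, ∀ f ∈ Fj j, f ∈ F) :
    TrivIndep ⇑Φ (fun j => (Fj j : Set B)) ↔
      IsInfFree ⇑φ ⇑φ' (fun j => unitize (Fj j : Set B)) :=
  statement6_general F hFmulR φ Φ φ' hφ1 hφF hφ'F Fj hFj

end TypeBPrime
end

section
/- Let (A_i)_{i∈I} be unital subalgebras of A, (F_i)_{i∈I} subalgebras of F, and P ∈ F with Φ(P) ≠ 0. Assume that (A_i)_{i∈I} are free with respect to φ and that the pair (⟨A_i : i∈I⟩, ⟨{P} ∪ ⋃_{i∈I} F_i⟩) of generated subalgebras is cyclic-antimonotone independent. Then for every n ≥ 1, every (i₁, …, iₙ) ∈ Iⁿ with i₁ ≠ i₂, …, i_{n−1} ≠ iₙ, and every choice of elements b_j = a_j + F_j with a_j ∈ A_{i_j}, F_j ∈ A_{i_j}⟨F_{i_j}⟩₀ and φ(b_j) = 0 (equivalently φ(a_j) = 0), one has φ_P(b₁ b₂ ⋯ bₙ) = φ_P(F₁ F₂ ⋯ Fₙ). -/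
open scoped BigOperators

namespace TypeBPrime

variable {B : Type*} [Ring B] [Algebra ℂ B]

/-!
Expand `∏ (aₖ + gₖ)` letter by letter; by linearity each `gₖ` may be taken to be a single word
`b₀ f₁ b₁ ⋯ fₘ bₘ`. A term `P c₁ ⋯ cₙ` (`cₖ ∈ {aₖ, gₖ}`) is then an alternating word
`1 · P · x₁ · f · x₂ ⋯ f · xₘ`, and cyclic-antimonotone independence factors `Φ` of it through
`φ(xₘ) · φ(x₁) ⋯ φ(xₘ₋₁)`. A block `xᵢ` that contains one of the centred letters `aₖ` has the form
`u · (centred letters of alternating indices) · v`, with `u`, `v` the outer letters of the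
neighbouring words, so freeness (after centring `u` and `v`) makes `φ(xᵢ)` vanish. Hence only the
term `∏ gₖ` survives.
-/

section PairProd

variable {M : Type*} [Monoid M]

def pairProd (l : List (M × M)) : M :=
  (l.map fun p => p.1 * p.2).prod

@[simp] lemma pairProd_nil : pairProd ([] : List (M × M)) = 1 := rfl

@[simp] lemma pairProd_cons (p : M × M) (l : List (M × M)) :
    pairProd (p :: l) = p.1 * p.2 * pairProd l := by
  simp [pairProd]

@[simp] lemma pairProd_append (l l' : List (M × M)) :
    pairProd (l ++ l') = pairProd l * pairProd l' := by
  simp [pairProd]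

lemma mul_pairProd_mul_mul_pairProd_cons (X t t' Y : M) (l r : List (M × M)) (q : M × M) :
    X * pairProd l * t * (pairProd (q :: r) * t' * Y) =
      X * pairProd (l ++ (t * q.1, q.2) :: r) * t' * Y := by
  simp [mul_assoc]

end PairProd

section CenteredWord

variable {ι R : Type*}

def IsCenteredWord (φ : R → ℂ) (Alg : ι → Set R) (w : List (ι × R)) : Prop :=
  w.IsChain (fun p q => p.1 ≠ q.1) ∧ ∀ p ∈ w, p.2 ∈ Alg p.1 ∧ φ p.2 = 0

lemma IsCenteredWord.cons {φ : R → ℂ} {Alg : ι → Set R} {i j : ι} {x y : R}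
    {w : List (ι × R)} (hw : IsCenteredWord φ Alg ((j, y) :: w)) (hx : x ∈ Alg i)
    (hx0 : φ x = 0) (hij : i ≠ j) : IsCenteredWord φ Alg ((i, x) :: (j, y) :: w) := by
  refine ⟨List.isChain_cons_cons.mpr ⟨hij, hw.1⟩, ?_⟩
  rintro p (_ | ⟨_, hp⟩)
  exacts [⟨hx, hx0⟩, hw.2 p hp]

end CenteredWord

section Ring

variable {R : Type*} [Ring R] {ι : Type*}

lemma altWord_succ {n : ℕ} (a : Fin (n + 2) → R) (f : Fin (n + 1) → R) :
    altWord a f = a 0 * f 0 * altWord (fun k => a k.succ) (fun k => f k.succ) := by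
  simp [altWord, List.ofFn_succ, mul_assoc]

lemma altWord_eq_prod_mul_last : ∀ {n : ℕ} (a : Fin (n + 1) → R) (f : Fin n → R),
    altWord a f = (List.ofFn fun k => a k.castSucc * f k).prod * a (Fin.last n)
  | 0, a, f => by simp [altWord]
  | n + 1, a, f => by
    rw [altWord_succ, altWord_eq_prod_mul_last, List.ofFn_succ]
    simp only [Fin.castSucc_zero, ← Fin.succ_castSucc, Fin.succ_last, List.prod_cons, mul_assoc]

lemma exists_pairProd_of_mem_wordSet {A₁ F₁ : Set R} {x : R} (hx : x ∈ wordSet A₁ F₁) :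
    ∃ q r, ∃ t ∈ A₁, (∀ p ∈ q :: r, p.1 ∈ A₁ ∧ p.2 ∈ F₁) ∧ x = pairProd (q :: r) * t := by
  obtain ⟨_ | n, hn, a, f, ha, hf, rfl⟩ := hx
  · omega
  refine ⟨(a 0, f 0), List.ofFn fun k : Fin n => (a k.succ.castSucc, f k.succ), a (Fin.last _),
    ha _, ?_, ?_⟩
  · simp only [List.mem_cons, List.mem_ofFn]
    rintro p (rfl | ⟨k, rfl⟩) <;> exact ⟨ha _, hf _⟩
  · rw [altWord_eq_prod_mul_last, List.ofFn_succ]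
    simp [pairProd, List.map_ofFn, Function.comp_def]

lemma wordSet_subset_of_mul_mem {A₁ F₁ F : Set R}
    (hFmulL : ∀ b : R, ∀ f ∈ F, b * f ∈ F) (hFmulR : ∀ b : R, ∀ f ∈ F, f * b ∈ F)
    (hF₁ : F₁ ⊆ F) : wordSet A₁ F₁ ⊆ F := by
  intro x hx
  obtain ⟨q, r, t, -, hqr, rfl⟩ := exists_pairProd_of_mem_wordSet hx
  rw [pairProd_cons]
  exact hFmulR _ _ (hFmulR _ _ (hFmulL _ _ (hF₁ (hqr q List.mem_cons_self).2)))

lemma forall_mem_append_cons_of_word {SA SF A₁ F₁ : Set R} (hA : A₁ ⊆ SA) (hF : F₁ ⊆ SF)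
    (hmul : ∀ x ∈ SA, ∀ y ∈ SA, x * y ∈ SA) {l r : List (R × R)} {q : R × R} {t : R}
    (hl : ∀ p ∈ l, p.1 ∈ SA ∧ p.2 ∈ SF) (ht : t ∈ SA) (hqr : ∀ p ∈ q :: r, p.1 ∈ A₁ ∧ p.2 ∈ F₁) :
    ∀ p ∈ l ++ (t * q.1, q.2) :: r, p.1 ∈ SA ∧ p.2 ∈ SF := by
  have hq := hqr q List.mem_cons_self
  simp only [List.mem_append, List.mem_cons]
  rintro p (hp | rfl | hp)
  · exact hl p hp
  · exact ⟨hmul _ ht _ (hA hq.1), hF hq.2⟩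
  · have := hqr p (List.mem_cons_of_mem _ hp)
    exact ⟨hA this.1, hF this.2⟩

-- `P * pairProd l * t` is the alternating word `1 · P · l₁.1 · l₁.2 ⋯ lₘ.1 · lₘ.2 · t`.
lemma CyclicAntimonotone.map_mul_pairProd_mul_eq_zero {φ Φ : R → ℂ} {SA SF : Set R}
    (hcam : CyclicAntimonotone φ Φ SA SF) (hSA : (1 : R) ∈ SA) {P t : R} {l : List (R × R)}
    (hP : P ∈ SF) (hl : ∀ p ∈ l, p.1 ∈ SA ∧ p.2 ∈ SF) (ht : t ∈ SA)
    (hzero : (∃ p ∈ l, φ p.1 = 0) ∨ φ t = 0) :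
    Φ (P * pairProd l * t) = 0 := by
  set a : Fin (l.length + 2) → R :=
    Fin.cons 1 (Fin.snoc (fun k : Fin l.length => l[(k : ℕ)].1) t)
  set f : Fin (l.length + 1) → R := Fin.cons P fun k : Fin l.length => l[(k : ℕ)].2
  have hword : P * pairProd l * t = altWord a f := by
    have hl : (List.ofFn fun k : Fin l.length => l[(k : ℕ)].1 * l[(k : ℕ)].2) =
        l.map fun p => p.1 * p.2 :=
      List.ofFn_getElem_eq_map l fun p => p.1 * p.2
    rw [altWord_eq_prod_mul_last, List.ofFn_succ]
    simp [a, f, pairProd, hl, mul_assoc]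
  have ha : ∀ k, a k ∈ SA := by
    intro k
    refine Fin.cases hSA (fun k => ?_) k
    refine Fin.lastCases ?_ (fun k => ?_) k <;> simp [a, ht, hl _ (List.getElem_mem _)]
  have hf : ∀ k, f k ∈ SF := by
    intro k
    refine Fin.cases hP (fun k => ?_) k
    simp [f, hl _ (List.getElem_mem _)]
  rw [hword, hcam _ (Nat.succ_pos _) a f ha hf]
  rcases hzero with ⟨p, hp, hp0⟩ | ht0
  · obtain ⟨k, hk, rfl⟩ := List.getElem_of_mem hp
    have hmem : (⟨k, hk⟩ : Fin l.length).castSucc.succ ∈ Finset.Ioo 0 (Fin.last _) := by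
      simp [Finset.mem_Ioo, Fin.lt_def, hk]
    have hak : a (⟨k, hk⟩ : Fin l.length).castSucc.succ = l[k].1 := by
      simp only [a, Fin.cons_succ, Fin.snoc_castSucc]
    rw [Finset.prod_eq_zero hmem (hak ▸ hp0), mul_zero, zero_mul]
  · simp [a, ht0]

lemma IsFreeFamily.map_prod_eq_zero {φ : R → ℂ} {Alg : ι → Set R} (hfree : IsFreeFamily φ Alg)
    {w : List (ι × R)} (hw : IsCenteredWord φ Alg w) (hne : w ≠ []) :
    φ (w.map Prod.snd).prod = 0 := by
  obtain ⟨p, w, rfl⟩ := List.exists_cons_of_ne_nil hne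
  have hprod : (List.ofFn fun k : Fin (w.length + 1) => (p :: w)[(k : ℕ)].2) =
      (p :: w).map Prod.snd :=
    List.ofFn_getElem_eq_map (p :: w) Prod.snd
  rw [← hprod]
  refine hfree w.length (fun k => (p :: w)[(k : ℕ)].1) _ (fun k => ?_) (fun k => ?_) (fun k => ?_)
  · exact List.isChain_iff_getElem.mp hw.1 k (by simp)
  · exact (hw.2 _ (List.getElem_mem _)).1
  · exact (hw.2 _ (List.getElem_mem _)).2

/-- What freeness still guarantees about a partial product `t` whose next letter has index `j`. -/
def KillsWordsFrom (φ : R → ℂ) (Alg : ι → Set R) (j : ι) (t : R) : Prop :=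
  ∀ x w, IsCenteredWord φ Alg ((j, x) :: w) → φ (t * (x * (w.map Prod.snd).prod)) = 0

section KillsWordsFrom

variable {φ : R → ℂ} {Alg : ι → Set R}

lemma killsWordsFrom_one (hfree : IsFreeFamily φ Alg) (j : ι) : KillsWordsFrom φ Alg j 1 := by
  intro x w hw
  simpa using hfree.map_prod_eq_zero hw (List.cons_ne_nil _ _)

lemma KillsWordsFrom.mul {j k : ι} {t x : R} (h : KillsWordsFrom φ Alg j t) (hx : x ∈ Alg j)
    (hx0 : φ x = 0) (hjk : j ≠ k) : KillsWordsFrom φ Alg k (t * x) := by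
  intro y w hw
  simpa [mul_assoc] using h x ((k, y) :: w) (hw.cons hx hx0 hjk)

lemma KillsWordsFrom.map_mul_eq_zero {j : ι} {t x : R} (h : KillsWordsFrom φ Alg j t)
    (hx : x ∈ Alg j) (hx0 : φ x = 0) : φ (t * x) = 0 := by
  simpa using h x [] ⟨List.isChain_singleton _, by simp [hx, hx0]⟩

end KillsWordsFrom

end Ring

section Algebra

variable {ι : Type*}

lemma map_mul_mul_eq_zero_of_mem_span (Φ : B →ₗ[ℂ] ℂ) {S : Set B} {X Y g : B}
    (hS : ∀ s ∈ S, Φ (X * s * Y) = 0) (hg : g ∈ Submodule.span ℂ S) : Φ (X * g * Y) = 0 := by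
  induction hg using Submodule.span_induction with
  | mem s hs => exact hS s hs
  | zero => simp
  | add x y _ _ hx hy => simp [mul_add, add_mul, hx, hy]
  | smul c x _ hx => simp [hx]

lemma sub_smul_one_mem {S : Subalgebra ℂ B} {x : B} (c : ℂ) (hx : x ∈ S) : x - c • 1 ∈ S :=
  sub_mem hx (S.smul_mem S.one_mem c)

lemma map_sub_smul_one {φ : B →ₗ[ℂ] ℂ} (hφ1 : φ 1 = 1) (x : B) : φ (x - φ x • 1) = 0 := by
  simp [hφ1]

lemma mul_eq_sub_smul_one_mul_add (c : ℂ) (x y : B) : x * y = (x - c • 1) * y + c • y := by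
  simp [sub_mul]

lemma mul_eq_mul_sub_smul_one_add (c : ℂ) (x y : B) : x * y = x * (y - c • 1) + c • x := by
  simp [mul_sub]

variable {Ai : ι → Subalgebra ℂ B} {φ : B →ₗ[ℂ] ℂ}

lemma killsWordsFrom_of_mem (hfree : IsFreeFamily ⇑φ fun i => (Ai i : Set B)) (hφ1 : φ 1 = 1)
    {i j : ι} {t : B} (ht : t ∈ Ai i) (hij : i ≠ j) :
    KillsWordsFrom φ (fun i => (Ai i : Set B)) j t := by
  intro x w hw
  have hcw := hw.cons (sub_smul_one_mem _ ht) (map_sub_smul_one hφ1 t) hij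
  have h₁ := hfree.map_prod_eq_zero hcw (List.cons_ne_nil _ _)
  have h₂ := hfree.map_prod_eq_zero hw (List.cons_ne_nil _ _)
  simp only [List.map_cons, List.prod_cons] at h₁ h₂
  rw [mul_eq_sub_smul_one_mul_add (φ t), map_add, map_smul, h₂, smul_zero, add_zero, h₁]

lemma KillsWordsFrom.map_mul_eq_zero_of_map_eq_zero (hφ1 : φ 1 = 1) {j : ι} {t b : B}
    (h : KillsWordsFrom φ (fun i => (Ai i : Set B)) j t) (ht0 : φ t = 0) (hb : b ∈ Ai j) :
    φ (t * b) = 0 := by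
  rw [mul_eq_mul_sub_smul_one_add (φ b), map_add, map_smul, ht0, smul_zero, add_zero]
  exact h.map_mul_eq_zero (sub_smul_one_mem _ hb) (map_sub_smul_one hφ1 b)

section Expansion

variable {SA : Subalgebra ℂ B} {SF : Set B} {Fi : ι → Set B} {Φ : B →ₗ[ℂ] ℂ} {P : B}
  (hfree : IsFreeFamily ⇑φ fun i => (Ai i : Set B)) (hφ1 : φ 1 = 1)
  (hAi : ∀ i, Ai i ≤ SA) (hFi : ∀ i, Fi i ⊆ SF)
  (hcam : CyclicAntimonotone ⇑φ ⇑Φ SA SF) (hP : P ∈ SF)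
include hfree hφ1 hAi hFi hcam hP

theorem map_mul_prod_add_eq_zero : ∀ (cs : List (ι × B × B)) (l : List (B × B)) (t : B),
    cs.IsChain (fun p q => p.1 ≠ q.1) →
    (∀ p ∈ cs, p.2.1 ∈ Ai p.1 ∧ φ p.2.1 = 0 ∧ p.2.2 ∈ wordSpan (Ai p.1) (Fi p.1)) →
    (∀ p ∈ l, p.1 ∈ SA ∧ p.2 ∈ SF) → t ∈ SA →
    (∀ q ∈ cs.head?, KillsWordsFrom φ (fun i => (Ai i : Set B)) q.1 t) →
    ((∃ p ∈ l, φ p.1 = 0) ∨ φ t = 0) →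
    Φ (P * pairProd l * t * (cs.map fun p => p.2.1 + p.2.2).prod) = 0
  | [], l, t, _, _, hl, ht, _, hz => by
    simpa using hcam.map_mul_pairProd_mul_eq_zero SA.one_mem hP hl ht hz
  | (j, a, g) :: cs, l, t, hchain, hcs, hl, ht, hkill, hz => by
    obtain ⟨hnext, hchain⟩ := List.isChain_cons.mp hchain
    obtain ⟨ha, ha0, hg⟩ := hcs _ List.mem_cons_self
    replace hcs := fun p hp => hcs p (List.mem_cons_of_mem _ hp)
    have hk : KillsWordsFrom φ (fun i => (Ai i : Set B)) j t := hkill _ rfl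
    set W := (cs.map fun p => p.2.1 + p.2.2).prod
    have hpure : Φ (P * pairProd l * (t * a) * W) = 0 :=
      map_mul_prod_add_eq_zero cs l (t * a) hchain hcs hl (mul_mem ht (hAi j ha))
        (fun q hq => hk.mul ha ha0 (hnext q hq)) (Or.inr (hk.map_mul_eq_zero ha ha0))
    have hword : Φ (P * pairProd l * t * g * W) = 0 := by
      refine map_mul_mul_eq_zero_of_mem_span Φ (fun s hs => ?_) hg
      obtain ⟨q, r, t', ht', hqr, rfl⟩ := exists_pairProd_of_mem_wordSet hs
      rw [mul_assoc _ _ W, mul_pairProd_mul_mul_pairProd_cons]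
      refine map_mul_prod_add_eq_zero cs _ t' hchain hcs
        (forall_mem_append_cons_of_word (hAi j) (hFi j) (fun _ hx _ hy => mul_mem hx hy) hl ht hqr)
        (hAi j ht') (fun q hq => killsWordsFrom_of_mem hfree hφ1 ht' (hnext q hq)) (Or.inl ?_)
      -- the word closes the open block `t` into `t * q.1`, which is centred if `t` is
      rcases hz with ⟨p, hp, hp0⟩ | ht0
      · exact ⟨p, List.mem_append_left _ hp, hp0⟩
      · exact ⟨_, List.mem_append_right _ List.mem_cons_self,
          hk.map_mul_eq_zero_of_map_eq_zero hφ1 ht0 (hqr q List.mem_cons_self).1⟩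
    have hsplit : P * pairProd l * t * ((a + g) * W) =
        P * pairProd l * (t * a) * W + P * pairProd l * t * g * W := by
      simp only [mul_add, add_mul, mul_assoc]
    rw [List.map_cons, List.prod_cons, hsplit, map_add, hpure, hword, add_zero]

theorem map_mul_prod_add_eq_map_mul_prod : ∀ (cs : List (ι × B × B)) (l : List (B × B)) (t : B),
    cs.IsChain (fun p q => p.1 ≠ q.1) →
    (∀ p ∈ cs, p.2.1 ∈ Ai p.1 ∧ φ p.2.1 = 0 ∧ p.2.2 ∈ wordSpan (Ai p.1) (Fi p.1)) →
    (∀ p ∈ l, p.1 ∈ SA ∧ p.2 ∈ SF) → t ∈ SA →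
    (∀ q ∈ cs.head?, KillsWordsFrom φ (fun i => (Ai i : Set B)) q.1 t) →
    Φ (P * pairProd l * t * (cs.map fun p => p.2.1 + p.2.2).prod) =
      Φ (P * pairProd l * t * (cs.map fun p => p.2.2).prod)
  | [], _, _, _, _, _, _, _ => rfl
  | (j, a, g) :: cs, l, t, hchain, hcs, hl, ht, hkill => by
    obtain ⟨hnext, hchain⟩ := List.isChain_cons.mp hchain
    obtain ⟨ha, ha0, hg⟩ := hcs _ List.mem_cons_self
    replace hcs := fun p hp => hcs p (List.mem_cons_of_mem _ hp)
    have hk : KillsWordsFrom φ (fun i => (Ai i : Set B)) j t := hkill _ rfl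
    set W := (cs.map fun p => p.2.1 + p.2.2).prod
    set G := (cs.map fun p => p.2.2).prod
    have hpure : Φ (P * pairProd l * (t * a) * W) = 0 :=
      map_mul_prod_add_eq_zero hfree hφ1 hAi hFi hcam hP cs l (t * a) hchain hcs hl
        (mul_mem ht (hAi j ha)) (fun q hq => hk.mul ha ha0 (hnext q hq))
        (Or.inr (hk.map_mul_eq_zero ha ha0))
    have hword : Φ (P * pairProd l * t * g * W) = Φ (P * pairProd l * t * g * G) := by
      rw [← sub_eq_zero, ← map_sub, ← mul_sub]
      refine map_mul_mul_eq_zero_of_mem_span Φ (fun s hs => ?_) hg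
      obtain ⟨q, r, t', ht', hqr, rfl⟩ := exists_pairProd_of_mem_wordSet hs
      rw [mul_sub, map_sub, sub_eq_zero, mul_assoc _ _ W, mul_assoc _ _ G,
        mul_pairProd_mul_mul_pairProd_cons, mul_pairProd_mul_mul_pairProd_cons]
      exact map_mul_prod_add_eq_map_mul_prod cs _ t' hchain hcs
        (forall_mem_append_cons_of_word (hAi j) (hFi j) (fun _ hx _ hy => mul_mem hx hy) hl ht hqr)
        (hAi j ht') (fun q hq => killsWordsFrom_of_mem hfree hφ1 ht' (hnext q hq))
    have hsplit : P * pairProd l * t * ((a + g) * W) =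
        P * pairProd l * (t * a) * W + P * pairProd l * t * g * W := by
      simp only [mul_add, add_mul, mul_assoc]
    rw [List.map_cons, List.prod_cons, hsplit, map_add, hpure, zero_add, hword, List.map_cons,
      List.prod_cons, ← mul_assoc]

end Expansion

end Algebra

theorem statement8_general
    {B : Type*} [Ring B] [Algebra ℂ B]
    (F : Submodule ℂ B)
    (hFmulL : ∀ b : B, ∀ f ∈ F, b * f ∈ F)
    (hFmulR : ∀ b : B, ∀ f ∈ F, f * b ∈ F)
    (φ Φ : B →ₗ[ℂ] ℂ)
    (hφ1 : φ 1 = 1) (hφF : ∀ f ∈ F, φ f = 0)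
    {ι : Type*}
    (Ai : ι → Subalgebra ℂ B)
    (Fi : ι → NonUnitalSubalgebra ℂ B) (hFi : ∀ i, ∀ f ∈ Fi i, f ∈ F)
    (P : B)
    (hfree : IsFreeFamily ⇑φ (fun i => (Ai i : Set B)))
    (hcam : CyclicAntimonotone ⇑φ ⇑Φ
      (Algebra.adjoin ℂ (⋃ i, (Ai i : Set B)) : Set B)
      (NonUnitalAlgebra.adjoin ℂ ({P} ∪ ⋃ i, (Fi i : Set B)) : Set B)) :
    ∀ (n : ℕ) (idx : Fin (n + 1) → ι) (a g : Fin (n + 1) → B),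
      (∀ k : Fin n, idx k.castSucc ≠ idx k.succ) →
      (∀ k, a k ∈ Ai (idx k)) →
      (∀ k, g k ∈ wordSpan (Ai (idx k) : Set B) (Fi (idx k) : Set B)) →
      (∀ k, φ (a k + g k) = 0) →
      Φ (P * (List.ofFn fun k => a k + g k).prod) / Φ P =
        Φ (P * (List.ofFn g).prod) / Φ P := by
  intro n idx a g hadj ha hg hφ0
  have hφa : ∀ k, φ (a k) = 0 := fun k => by
    have hgF : g k ∈ F := Submodule.span_le.mpr
      (wordSet_subset_of_mul_mem hFmulL hFmulR (hFi (idx k))) (hg k)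
    simpa [hφF _ hgF] using hφ0 k
  have key := map_mul_prod_add_eq_map_mul_prod hfree hφ1 (Fi := fun i => (Fi i : Set B))
    (fun i _ hx => Algebra.subset_adjoin (Set.mem_iUnion.mpr ⟨i, hx⟩))
    (fun i _ hx => NonUnitalAlgebra.subset_adjoin ℂ (Or.inr (Set.mem_iUnion.mpr ⟨i, hx⟩)))
    hcam (NonUnitalAlgebra.subset_adjoin ℂ (Or.inl rfl))
    (List.ofFn fun k => (idx k, a k, g k)) [] 1
    (List.isChain_ofFn.mpr fun k hk => hadj ⟨k, by omega⟩)
    (by simp only [List.mem_ofFn]; rintro _ ⟨k, rfl⟩; exact ⟨ha k, hφa k, hg k⟩)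
    (by simp) (one_mem _) (fun q _ => killsWordsFrom_one hfree q.1)
  simp only [List.map_ofFn, Function.comp_def, pairProd_nil, mul_one] at key
  rw [key]

theorem statement8
    {B : Type*} [Ring B] [Algebra ℂ B]
    (A : Subalgebra ℂ B) (F : Submodule ℂ B)
    (hFmulL : ∀ b : B, ∀ f ∈ F, b * f ∈ F)
    (hFmulR : ∀ b : B, ∀ f ∈ F, f * b ∈ F)
    (hAF : ∀ x ∈ A, x ∈ F → x = 0)
    (hdec : ∀ x : B, ∃ a ∈ A, ∃ f ∈ F, x = a + f)
    (φ Φ : B →ₗ[ℂ] ℂ)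
    (hφ1 : φ 1 = 1) (hφF : ∀ f ∈ F, φ f = 0)
    {ι : Type*}
    (Ai : ι → Subalgebra ℂ B) (hAi : ∀ i, Ai i ≤ A)
    (Fi : ι → NonUnitalSubalgebra ℂ B) (hFi : ∀ i, ∀ f ∈ Fi i, f ∈ F)
    (P : B) (hP : P ∈ F) (hΦP : Φ P ≠ 0)
    (hfree : IsFreeFamily ⇑φ (fun i => (Ai i : Set B)))
    (hcam : CyclicAntimonotone ⇑φ ⇑Φ
      (Algebra.adjoin ℂ (⋃ i, (Ai i : Set B)) : Set B)
      (NonUnitalAlgebra.adjoin ℂ ({P} ∪ ⋃ i, (Fi i : Set B)) : Set B)) :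
    ∀ (n : ℕ) (idx : Fin (n + 1) → ι) (a g : Fin (n + 1) → B),
      (∀ k : Fin n, idx k.castSucc ≠ idx k.succ) →
      (∀ k, a k ∈ Ai (idx k)) →
      (∀ k, g k ∈ wordSpan (Ai (idx k) : Set B) (Fi (idx k) : Set B)) →
      (∀ k, φ (a k + g k) = 0) →
      Φ (P * (List.ofFn fun k => a k + g k).prod) / Φ P =
        Φ (P * (List.ofFn g).prod) / Φ P :=
  statement8_general F hFmulL hFmulR φ Φ hφ1 hφF Ai Fi hFi P hfree hcam

end TypeBPrime
end

section
/- Let A₁ ⊆ A be a unital subalgebra and P ∈ F with Φ(P) ≠ 0, and suppose the pair (A₁, F_P) with F_P := {c Pⁿ : c ∈ ℂ, n ≥ 1} is cyclic-antimonotone independent. Then φ_P(a) = φ(a) for every a ∈ A₁. Consequently, if (A_i)_{i∈I} are unital subalgebras of A with ⟨A_i : i∈I⟩ ⊆ A₁, then (A_i)_{i∈I} are free with respect to φ if and only if (A_i)_{i∈I} are conditionally free with respect to (φ, φ_P). -/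
open scoped BigOperators

namespace TypeBPrime

variable {B : Type*} [Ring B] [Algebra ℂ B]

theorem CyclicAntimonotone.apply_mul_eq {B : Type*} [Ring B] {φ Φ : B → ℂ} {A₁ F₁ : Set B}
    (hcam : CyclicAntimonotone φ Φ A₁ F₁) (h1 : (1 : B) ∈ A₁)
    {P : B} (hP : P ∈ F₁) {a : B} (ha : a ∈ A₁) :
    Φ (P * a) = φ a * Φ P := by
  have hword := hcam 1 one_pos ![1, a] ![P]
    (Fin.forall_fin_two.2 ⟨h1, ha⟩) (fun k => by rwa [Fin.fin_one_eq_zero k])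
  have hIoo : Finset.Ioo (0 : Fin 2) 1 = ∅ := by decide
  simpa [altWord, hIoo] using hword

/-- Under freeness both sides of the `ψ`-condition vanish: the product is `φ`-centred and
`ψ (b 0) = φ (b 0) = 0`. -/
theorem cFree_iff_isFreeFamily_of_eqOn {B ι : Type*} [Ring B] {φ ψ : B → ℂ} {Alg : ι → Set B}
    (S : Submonoid B) (hAlg : ∀ i, Alg i ⊆ S) (hψ : ∀ x ∈ S, ψ x = φ x) :
    CFree φ ψ Alg ↔ IsFreeFamily φ Alg := by
  refine ⟨And.left, fun hfree => ⟨hfree, fun n idx b halt hmem hcent => ?_⟩⟩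
  have hprod : (List.ofFn b).prod ∈ S := S.list_prod_mem fun x hx => by
    obtain ⟨k, rfl⟩ := List.mem_ofFn.1 hx
    exact hAlg _ (hmem k)
  rw [hψ _ hprod, hfree n idx b halt hmem hcent, eq_comm]
  exact Finset.prod_eq_zero (Finset.mem_univ 0) (by rw [hψ _ (hAlg _ (hmem 0)), hcent 0])

theorem statement9_general
    {B : Type*} [Ring B] [Algebra ℂ B]
    (φ Φ : B →ₗ[ℂ] ℂ)
    (A₁ : Subalgebra ℂ B)
    (P : B) (hΦP : Φ P ≠ 0)
    (hcam : CyclicAntimonotone ⇑φ ⇑Φ (A₁ : Set B)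
      {x | ∃ (c : ℂ) (n : ℕ), 0 < n ∧ x = c • P ^ n})
    {ι : Type*} (Ai : ι → Subalgebra ℂ B)
    (hAi : Algebra.adjoin ℂ (⋃ i, (Ai i : Set B)) ≤ A₁) :
    (∀ a ∈ A₁, Φ (P * a) / Φ P = φ a) ∧
      (IsFreeFamily ⇑φ (fun i => (Ai i : Set B)) ↔
        CFree ⇑φ (fun b => Φ (P * b) / Φ P) (fun i => (Ai i : Set B))) := by
  have hP : P ∈ {x | ∃ (c : ℂ) (n : ℕ), 0 < n ∧ x = c • P ^ n} := ⟨1, 1, one_pos, by simp⟩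
  have hφP : ∀ a ∈ A₁, Φ (P * a) / Φ P = φ a := fun a ha => by
    rw [hcam.apply_mul_eq A₁.one_mem hP ha, mul_div_cancel_right₀ _ hΦP]
  have hAiA₁ : ∀ i, (Ai i : Set B) ⊆ A₁.toSubmonoid := fun i =>
    (Set.subset_iUnion (fun i => (Ai i : Set B)) i).trans Algebra.subset_adjoin |>.trans hAi
  exact ⟨hφP, (cFree_iff_isFreeFamily_of_eqOn A₁.toSubmonoid hAiA₁ hφP).symm⟩

theorem statement9
    {B : Type*} [Ring B] [Algebra ℂ B]
    (A : Subalgebra ℂ B) (F : Submodule ℂ B)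
    (hFmulL : ∀ b : B, ∀ f ∈ F, b * f ∈ F)
    (hFmulR : ∀ b : B, ∀ f ∈ F, f * b ∈ F)
    (hAF : ∀ x ∈ A, x ∈ F → x = 0)
    (hdec : ∀ x : B, ∃ a ∈ A, ∃ f ∈ F, x = a + f)
    (φ Φ : B →ₗ[ℂ] ℂ)
    (hφ1 : φ 1 = 1) (hφF : ∀ f ∈ F, φ f = 0)
    (A₁ : Subalgebra ℂ B) (hA₁A : A₁ ≤ A)
    (P : B) (hP : P ∈ F) (hΦP : Φ P ≠ 0)
    (hcam : CyclicAntimonotone ⇑φ ⇑Φ (A₁ : Set B)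
      {x | ∃ (c : ℂ) (n : ℕ), 0 < n ∧ x = c • P ^ n})
    {ι : Type*} (Ai : ι → Subalgebra ℂ B)
    (hAi : Algebra.adjoin ℂ (⋃ i, (Ai i : Set B)) ≤ A₁) :
    (∀ a ∈ A₁, Φ (P * a) / Φ P = φ a) ∧
      (IsFreeFamily ⇑φ (fun i => (Ai i : Set B)) ↔
        CFree ⇑φ (fun b => Φ (P * b) / Φ P) (fun i => (Ai i : Set B))) :=
  statement9_general φ Φ A₁ P hΦP hcam Ai hAi

end TypeBPrime
end

section
/- Let (A_i)_{i∈I} be unital subalgebras of A, (F_i)_{i∈I} subalgebras of F, and P ∈ F with Φ(P) ≠ 0. Assume that (A_i)_{i∈I} are free with respect to φ, that the pair (⟨A_i : i∈I⟩, ⟨{P} ∪ ⋃_{i∈I} F_i⟩) of generated subalgebras is cyclic-antimonotone independent, and that the subalgebras (F_i)_{i∈I} are Boolean independent with respect to φ_P. Then the subalgebras (A_i⟨F_i⟩₀)_{i∈I} of F are Boolean independent with respect to φ_P. -/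
open scoped BigOperators

namespace TypeBPrime

variable {B : Type*} [Ring B] [Algebra ℂ B]

/-!
Rewrite a word `a₀ f₁ a₁ ⋯ fₘ aₘ` as `(a₀ f₁) ⋯ (a_{m-1} fₘ) aₘ`. Cyclic-antimonotone
independence applied to `1 · P · a₀ f₁ ⋯ fₘ aₘ` gives
`Φ(P w) = φ(a₀) ⋯ φ(aₘ) · Φ(P f₁ ⋯ fₘ)`. A product of words from alternating blocks is again
a word, in which the last letter `a` of each block merges with the first letter of the next;
freeness of the `Aᵢ` splits `φ` of each merged letter, so the `φ`-weight and the `F`-part of the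
product are the products of those of the blocks. Boolean independence of the `Fᵢ` then factors
`φ_P` of the `F`-part. Finally, `φ_P` is linear and the product is multilinear, so the
factorisation passes from words to their spans.
-/

theorem _root_.MultilinearMap.apply_eq_of_forall_mem_span {R ι N : Type*} {M : ι → Type*}
    [CommSemiring R] [Finite ι] [∀ i, AddCommMonoid (M i)] [∀ i, Module R (M i)]
    [AddCommMonoid N] [Module R N] {f f' : MultilinearMap R M N} {S : ∀ i, Set (M i)}
    (h : ∀ m : ∀ i, M i, (∀ i, m i ∈ S i) → f m = f' m)
    {m : ∀ i, M i} (hm : ∀ i, m i ∈ Submodule.span R (S i)) : f m = f' m := by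
  have hspan : f.compLinearMap (fun i => (Submodule.span R (S i)).subtype) =
      f'.compLinearMap (fun i => (Submodule.span R (S i)).subtype) :=
    MultilinearMap.ext_of_span_eq_top
      (g := fun i (x : ((↑) : Submodule.span R (S i) → M i) ⁻¹' S i) =>
        (x : Submodule.span R (S i)))
      (fun i => by rw [Subtype.range_coe]; exact Submodule.span_span_coe_preimage)
      (fun j => h _ fun i => (j i).2)
  exact DFunLike.congr_fun hspan fun i => ⟨m i, hm i⟩

theorem _root_.list_prod_mem_of_ne_nil {M S : Type*} [Monoid M] [SetLike S M]
    [MulMemClass S M] {s : S} : ∀ {l : List M}, l ≠ [] → (∀ x ∈ l, x ∈ s) → l.prod ∈ s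
  | [x], _, h => by simpa using h x (by simp)
  | x :: y :: l, _, h => by
    rw [List.prod_cons]
    exact mul_mem (h x (by simp))
      (list_prod_mem_of_ne_nil (by simp) fun z hz => h z (by simp [hz]))

theorem _root_.Fin.prod_Ioo_zero_last {M : Type*} [CommMonoid M] {n : ℕ}
    (g : Fin (n + 2) → M) :
    ∏ k ∈ Finset.Ioo 0 (Fin.last (n + 1)), g k = ∏ j : Fin n, g j.succ.castSucc := by
  rw [← Fin.castSucc_zero, ← Fin.map_castSuccEmb_Ioi, Finset.prod_map, Fin.prod_Ioi_zero]
  rfl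

section Monoid

variable {M : Type*} [Monoid M]

def pairWord (L : List (M × M)) (t : M) : M :=
  (L.map fun p => p.1 * p.2).prod * t

theorem pairWord_mul_pairWord_cons (L N : List (M × M)) (p : M × M) (t s : M) :
    pairWord L t * pairWord (p :: N) s = pairWord (L ++ (t * p.1, p.2) :: N) s := by
  simp [pairWord, mul_assoc]

end Monoid

section Ring

variable {R : Type*} [Ring R]

theorem altWord_eq_pairWord {n : ℕ} (a : Fin (n + 1) → R) (f : Fin n → R) :
    altWord a f = pairWord (List.ofFn fun k => (a k.castSucc, f k)) (a (Fin.last n)) := by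
  induction n with
  | zero => simp [altWord, pairWord]
  | succ n ih =>
    have h := ih (fun k => a k.succ) (fun k => f k.succ)
    simp only [altWord, pairWord, List.map_ofFn, Function.comp_def, Fin.succ_last,
      Fin.succ_castSucc] at h ⊢
    rw [List.ofFn_succ, List.ofFn_succ, List.prod_cons, List.prod_cons, mul_assoc (f 0), h]
    simp [mul_assoc]

theorem exists_pairWord_of_mem_wordSet {A₁ F₁ : Set R} {x : R} (hx : x ∈ wordSet A₁ F₁) :
    ∃ (L : List (R × R)) (t : R), L ≠ [] ∧ (∀ p ∈ L, p.1 ∈ A₁ ∧ p.2 ∈ F₁) ∧ t ∈ A₁ ∧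
      x = pairWord L t := by
  obtain ⟨n, hn, a, f, ha, hf, rfl⟩ := hx
  refine ⟨_, _, ?_, ?_, ha _, altWord_eq_pairWord a f⟩
  · simpa using hn.ne'
  · simp only [List.mem_ofFn, forall_exists_index]
    rintro _ k rfl
    exact ⟨ha _, hf k⟩

variable {φ Φ : R → ℂ} {A₁ F₁ : Set R}

theorem CyclicAntimonotone.apply_mul_altWord (h : CyclicAntimonotone φ Φ A₁ F₁)
    (h1 : (1 : R) ∈ A₁) {P : R} (hP : P ∈ F₁) {n : ℕ} {a : Fin (n + 1) → R} {f : Fin n → R}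
    (ha : ∀ k, a k ∈ A₁) (hf : ∀ k, f k ∈ F₁) :
    Φ (P * altWord a f) = (∏ k, φ (a k)) * Φ (P * (List.ofFn f).prod) := by
  have hword : altWord (Fin.cons 1 a) (Fin.cons P f) = P * altWord a f := by
    simp [altWord, List.ofFn_succ, mul_assoc]
  have h' := h (n + 1) n.succ_pos (Fin.cons 1 a) (Fin.cons P f) (Fin.cases h1 ha)
    (Fin.cases hP hf)
  rw [hword, Fin.prod_Ioo_zero_last] at h'
  rw [h', Fin.prod_univ_castSucc]
  simp [List.ofFn_succ, mul_comm]

theorem CyclicAntimonotone.apply_mul_pairWord (h : CyclicAntimonotone φ Φ A₁ F₁)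
    (h1 : (1 : R) ∈ A₁) {P : R} (hP : P ∈ F₁) {L : List (R × R)} {t : R}
    (hL : ∀ p ∈ L, p.1 ∈ A₁ ∧ p.2 ∈ F₁) (ht : t ∈ A₁) :
    Φ (P * pairWord L t) =
      (L.map fun p => φ p.1).prod * φ t * Φ (P * (L.map Prod.snd).prod) := by
  have hword : pairWord L t =
      altWord (Fin.snoc (fun k : Fin L.length => L[k.1].1) t) fun k => L[k.1].2 := by
    simp [altWord_eq_pairWord, List.ofFn_getElem]
  have ha : ∀ k, (Fin.snoc (fun k : Fin L.length => L[k.1].1) t : _ → R) k ∈ A₁ :=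
    Fin.lastCases (by simpa using ht) fun k => by simpa using (hL _ (List.getElem_mem k.2)).1
  rw [hword, h.apply_mul_altWord h1 hP ha fun k => (hL _ (List.getElem_mem k.2)).2,
    Fin.prod_univ_castSucc]
  simp [List.ofFn_getElem_eq_map, ← Fin.prod_univ_fun_getElem L fun p => φ p.1]

end Ring

theorem IsFreeFamily.apply_mul_of_ne {ι : Type*} {φ : B →ₗ[ℂ] ℂ} (hφ1 : φ 1 = 1)
    {Ai : ι → Subalgebra ℂ B} (hfree : IsFreeFamily φ fun i => (Ai i : Set B))
    {i j : ι} (hij : i ≠ j) {x y : B} (hx : x ∈ Ai i) (hy : y ∈ Ai j) :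
    φ (x * y) = φ x * φ y := by
  have hcentered : ∀ z, φ (z - φ z • 1) = 0 := fun z => by simp [hφ1]
  have h := hfree 1 ![i, j] ![x - φ x • 1, y - φ y • 1] (by simpa using hij)
    (fun k => by
      fin_cases k
      · exact sub_mem hx (Subalgebra.smul_mem _ (one_mem _) _)
      · exact sub_mem hy (Subalgebra.smul_mem _ (one_mem _) _))
    (fun k => by fin_cases k <;> exact hcentered _)
  have hexpand : φ ((x - φ x • 1) * (y - φ y • 1)) = φ (x * y) - φ x * φ y := by
    simp [sub_mul, mul_sub, hφ1]
  rw [← sub_eq_zero, ← hexpand]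
  simpa [List.ofFn_succ] using h

theorem exists_pairWord_eq_prod_ofFn {ι : Type*} {φ : B →ₗ[ℂ] ℂ} (hφ1 : φ 1 = 1)
    {Ai : ι → Subalgebra ℂ B} (hfree : IsFreeFamily φ fun i => (Ai i : Set B))
    {Fi : ι → Set B} {n : ℕ} {idx : Fin (n + 1) → ι}
    (halt : ∀ k : Fin n, idx k.castSucc ≠ idx k.succ)
    {L : Fin (n + 1) → List (B × B)} {t : Fin (n + 1) → B} (hLne : ∀ k, L k ≠ [])
    (hL : ∀ k, ∀ p ∈ L k, p.1 ∈ Ai (idx k) ∧ p.2 ∈ Fi (idx k)) (ht : ∀ k, t k ∈ Ai (idx k)) :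
    ∃ M : List (B × B),
      (∀ p ∈ M, p.1 ∈ Algebra.adjoin ℂ (⋃ i, (Ai i : Set B)) ∧ p.2 ∈ ⋃ i, Fi i) ∧
      (List.ofFn fun k => pairWord (L k) (t k)).prod = pairWord M (t (Fin.last n)) ∧
      (M.map fun p => φ p.1).prod * φ (t (Fin.last n)) =
        ∏ k, ((L k).map fun p => φ p.1).prod * φ (t k) ∧
      (M.map Prod.snd).prod = (List.ofFn fun k => ((L k).map Prod.snd).prod).prod := by
  have hAi : ∀ i, ∀ x ∈ Ai i, x ∈ Algebra.adjoin ℂ (⋃ i, (Ai i : Set B)) :=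
    fun i x hx => Algebra.subset_adjoin (Set.mem_iUnion_of_mem i hx)
  induction n with
  | zero =>
    refine ⟨L 0, fun p hp => ⟨hAi _ _ (hL 0 p hp).1, Set.mem_iUnion_of_mem _ (hL 0 p hp).2⟩,
      ?_, ?_, ?_⟩ <;> simp [pairWord]
  | succ n ih =>
    obtain ⟨M, hM, hprod, hweight, hsnd⟩ :=
      ih (fun k => halt k.castSucc) (fun k => hLne k.castSucc) (fun k => hL k.castSucc)
        (fun k => ht k.castSucc)
    obtain ⟨p, N, hpN⟩ := List.exists_cons_of_ne_nil (hLne (Fin.last (n + 1)))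
    have hp := hL (Fin.last (n + 1))
    rw [hpN] at hp
    have hmerge : φ (t (Fin.last n).castSucc * p.1) = φ (t (Fin.last n).castSucc) * φ p.1 :=
      hfree.apply_mul_of_ne hφ1 (halt (Fin.last n)) (ht _) (hp p (by simp)).1
    refine ⟨M ++ (t (Fin.last n).castSucc * p.1, p.2) :: N, ?_, ?_, ?_, ?_⟩
    · simp only [List.mem_append, List.mem_cons]
      rintro q (hq | rfl | hq)
      · exact hM q hq
      · exact ⟨mul_mem (hAi _ _ (ht _)) (hAi _ _ (hp p (by simp)).1),
          Set.mem_iUnion_of_mem _ (hp p (by simp)).2⟩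
      · exact ⟨hAi _ _ (hp q (by simp [hq])).1, Set.mem_iUnion_of_mem _ (hp q (by simp [hq])).2⟩
    · rw [List.ofFn_succ', List.prod_concat, hprod, hpN, pairWord_mul_pairWord_cons]
    · rw [Fin.prod_univ_castSucc, ← hweight, hpN]
      simp only [List.map_append, List.map_cons, List.prod_append, List.prod_cons, hmerge]
      ring
    · rw [List.ofFn_succ', List.prod_concat, ← hsnd, hpN]
      simp

theorem boolIndep_wordSet {ι : Type*} {φ Φ : B →ₗ[ℂ] ℂ} (hφ1 : φ 1 = 1)
    {Ai : ι → Subalgebra ℂ B} {Fi : ι → NonUnitalSubalgebra ℂ B} {P : B}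
    (hfree : IsFreeFamily φ fun i => (Ai i : Set B))
    (hcam : CyclicAntimonotone φ Φ (Algebra.adjoin ℂ (⋃ i, (Ai i : Set B)) : Set B)
      (NonUnitalAlgebra.adjoin ℂ ({P} ∪ ⋃ i, (Fi i : Set B)) : Set B))
    (hbool : BoolIndep (fun b => Φ (P * b) / Φ P) fun i => (Fi i : Set B)) :
    BoolIndep (fun b => Φ (P * b) / Φ P) fun i => wordSet (Ai i : Set B) (Fi i : Set B) := by
  intro n idx c halt hc
  choose L t hLne hL ht hcL using fun k => exists_pairWord_of_mem_wordSet (hc k)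
  obtain ⟨M, hM, hprod, hweight, hsnd⟩ :=
    exists_pairWord_eq_prod_ofFn (Fi := fun i => (Fi i : Set B)) hφ1 hfree halt hLne hL ht
  have hAi : ∀ i, ∀ x ∈ Ai i, x ∈ Algebra.adjoin ℂ (⋃ i, (Ai i : Set B)) :=
    fun i x hx => Algebra.subset_adjoin (Set.mem_iUnion_of_mem i hx)
  have hcamP : ∀ {L : List (B × B)} {t : B},
      (∀ p ∈ L, p.1 ∈ Algebra.adjoin ℂ (⋃ i, (Ai i : Set B)) ∧ p.2 ∈ ⋃ i, (Fi i : Set B)) →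
      t ∈ Algebra.adjoin ℂ (⋃ i, (Ai i : Set B)) →
      Φ (P * pairWord L t) =
        (L.map fun p => φ p.1).prod * φ t * Φ (P * (L.map Prod.snd).prod) :=
    fun hL ht => hcam.apply_mul_pairWord (one_mem _)
      (NonUnitalAlgebra.subset_adjoin ℂ (Or.inl rfl))
      (fun p hp => ⟨(hL p hp).1, NonUnitalAlgebra.subset_adjoin ℂ (Or.inr (hL p hp).2)⟩) ht
  have hblock : ∀ k, Φ (P * c k) / Φ P = ((L k).map fun p => φ p.1).prod * φ (t k) *
      (Φ (P * ((L k).map Prod.snd).prod) / Φ P) := fun k => by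
    rw [hcL k, hcamP (fun p hp => ⟨hAi _ _ (hL k p hp).1, Set.mem_iUnion_of_mem _ (hL k p hp).2⟩)
      (hAi _ _ (ht k)), mul_div_assoc]
  have hsndmem : ∀ k, ((L k).map Prod.snd).prod ∈ (Fi (idx k) : Set B) := fun k =>
    list_prod_mem_of_ne_nil (by simpa using hLne k) fun _ hx => by
      obtain ⟨p, hp, rfl⟩ := List.mem_map.1 hx
      exact (hL k p hp).2
  calc Φ (P * (List.ofFn c).prod) / Φ P
      = (∏ k, ((L k).map fun p => φ p.1).prod * φ (t k)) *
          (Φ (P * (List.ofFn fun k => ((L k).map Prod.snd).prod).prod) / Φ P) := by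
        rw [funext hcL, hprod, hcamP hM (hAi _ _ (ht _)), hweight, hsnd, mul_div_assoc]
    _ = ∏ k, ((L k).map fun p => φ p.1).prod * φ (t k) *
          (Φ (P * ((L k).map Prod.snd).prod) / Φ P) := by
        have hg := hbool n idx _ halt hsndmem
        beta_reduce at hg
        rw [hg, ← Finset.prod_mul_distrib]
    _ = ∏ k, Φ (P * c k) / Φ P := by simp only [hblock]

theorem BoolIndep.span {ι : Type*} {ψ : B →ₗ[ℂ] ℂ} {C : ι → Set B} (h : BoolIndep ψ C) :
    BoolIndep ψ fun i => (Submodule.span ℂ (C i) : Set B) := by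
  intro n idx c halt hc
  simpa using MultilinearMap.apply_eq_of_forall_mem_span
    (f := ψ.compMultilinearMap (MultilinearMap.mkPiAlgebraFin ℂ (n + 1) B))
    (f' := (MultilinearMap.mkPiAlgebra ℂ (Fin (n + 1)) ℂ).compLinearMap fun _ => ψ)
    (fun m hm => by simpa using h n idx m halt hm) hc

theorem statement11_general
    {B : Type*} [Ring B] [Algebra ℂ B]
    (φ Φ : B →ₗ[ℂ] ℂ)
    (hφ1 : φ 1 = 1)
    {ι : Type*}
    (Ai : ι → Subalgebra ℂ B)
    (Fi : ι → NonUnitalSubalgebra ℂ B)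
    (P : B)
    (hfree : IsFreeFamily ⇑φ (fun i => (Ai i : Set B)))
    (hcam : CyclicAntimonotone ⇑φ ⇑Φ
      (Algebra.adjoin ℂ (⋃ i, (Ai i : Set B)) : Set B)
      (NonUnitalAlgebra.adjoin ℂ ({P} ∪ ⋃ i, (Fi i : Set B)) : Set B))
    (hbool : BoolIndep (fun b => Φ (P * b) / Φ P) (fun i => (Fi i : Set B))) :
    BoolIndep (fun b => Φ (P * b) / Φ P)
      (fun i => wordSpan (Ai i : Set B) (Fi i : Set B)) := by
  have hwords := boolIndep_wordSet hφ1 hfree hcam hbool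
  have hψ : (fun b => Φ (P * b) / Φ P) = ⇑((Φ P)⁻¹ • Φ ∘ₗ LinearMap.mulLeft ℂ P) := by
    ext b
    simp [div_eq_inv_mul]
  rw [hψ] at hwords ⊢
  exact hwords.span

theorem statement11
    {B : Type*} [Ring B] [Algebra ℂ B]
    (A : Subalgebra ℂ B) (F : Submodule ℂ B)
    (hFmulL : ∀ b : B, ∀ f ∈ F, b * f ∈ F)
    (hFmulR : ∀ b : B, ∀ f ∈ F, f * b ∈ F)
    (hAF : ∀ x ∈ A, x ∈ F → x = 0)
    (hdec : ∀ x : B, ∃ a ∈ A, ∃ f ∈ F, x = a + f)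
    (φ Φ : B →ₗ[ℂ] ℂ)
    (hφ1 : φ 1 = 1) (hφF : ∀ f ∈ F, φ f = 0)
    {ι : Type*}
    (Ai : ι → Subalgebra ℂ B) (hAi : ∀ i, Ai i ≤ A)
    (Fi : ι → NonUnitalSubalgebra ℂ B) (hFi : ∀ i, ∀ f ∈ Fi i, f ∈ F)
    (P : B) (hP : P ∈ F) (hΦP : Φ P ≠ 0)
    (hfree : IsFreeFamily ⇑φ (fun i => (Ai i : Set B)))
    (hcam : CyclicAntimonotone ⇑φ ⇑Φ
      (Algebra.adjoin ℂ (⋃ i, (Ai i : Set B)) : Set B)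
      (NonUnitalAlgebra.adjoin ℂ ({P} ∪ ⋃ i, (Fi i : Set B)) : Set B))
    (hbool : BoolIndep (fun b => Φ (P * b) / Φ P) (fun i => (Fi i : Set B))) :
    BoolIndep (fun b => Φ (P * b) / Φ P)
      (fun i => wordSpan (Ai i : Set B) (Fi i : Set B)) :=
  statement11_general φ Φ hφ1 Ai Fi P hfree hcam hbool

end TypeBPrime
end

section
/- For every a ∈ A and every n ≥ 1 one has φ((p a p)ⁿ) = φ(aⁿ) and φ′((p a p)ⁿ) = −tₙ, where (tₙ)_{n≥0} is the inverse Markov–Krein transform of the moment sequence mₙ := φ(aⁿ) (with m₀ := 1). Equivalently, with ψ := φ and ψ′ := φ + φ′, one has ψ′((p a p)ⁿ) = mₙ − tₙ for all n ≥ 1 and ψ′(p) = 0; that is, the infinitesimal distribution of p a p with respect to (ψ, ψ′) is (μ, μ − τ), where μ is the distribution of a with respect to φ and τ is the inverse Markov–Krein transform of μ. -/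
open scoped BigOperators

/-!
With `p = 1 - q` one has `(p a p)ⁿ = p (a p)ⁿ` for `n ≥ 1`, hence
`aⁿ - (p a p)ⁿ = ∑_{i+k=n} aⁱ q (a p)ᵏ ∈ F`. This gives `φ((p a p)ⁿ) = φ(aⁿ)` and
`φ′((p a p)ⁿ) = -∑_{i+k=n} c i k` with `c i k = Φ(aⁱ q (a p)ᵏ)`.

Cyclic-antimonotone independence lets a letter `z ∈ A` between two copies of `q` be replaced
by the scalar `φ z`. Expanding `aᵏ = (a p)ᵏ + ∑_{j+l=k-1} a^{j+1} q (a p)ˡ` inside `Φ(aⁱ q aᵏ) = m_{i+k}`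
therefore yields `∑_{k+l=n} c i k · m_l = m_{i+n}`. Summing over `i`, `u n = ∑_{i+k=n} c i k`
satisfies `∑_{j+l=n} u_j m_l = (n+1) m_n`, the relation defining `t`; as `m₀ = 1`, convolution
with `m` is injective, so `u = t`.
-/

open Finset

theorem Finset.Nat.sum_antidiagonal_sum_antidiagonal_fst {M : Type*} [AddCommMonoid M] (n : ℕ)
    (f : ℕ → ℕ → ℕ → M) :
    ∑ p ∈ antidiagonal n, ∑ r ∈ antidiagonal p.1, f r.1 r.2 p.2 =
      ∑ p ∈ antidiagonal n, ∑ r ∈ antidiagonal p.2, f p.1 r.1 r.2 := by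
  simp_rw [Finset.sum_sigma']
  apply Finset.sum_bij' (fun x _ => ⟨(x.2.1, x.2.2 + x.1.2), (x.2.2, x.1.2)⟩)
    (fun x _ => ⟨(x.1.1 + x.2.1, x.2.2), (x.1.1, x.2.1)⟩) <;> aesop (add simp [add_assoc])

theorem eq_of_sum_antidiagonal_mul_eq {K : Type*} [CommRing K] [IsDomain K] {u v m : ℕ → K}
    (hm : m 0 ≠ 0)
    (h : ∀ n, ∑ p ∈ antidiagonal n, u p.1 * m p.2 = ∑ p ∈ antidiagonal n, v p.1 * m p.2) :
    u = v := by
  have hM : PowerSeries.mk m ≠ 0 := fun h0 => hm <| by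
    simpa using congrArg (PowerSeries.coeff 0) h0
  have hUV : PowerSeries.mk u * PowerSeries.mk m = PowerSeries.mk v * PowerSeries.mk m := by
    ext n
    simpa [PowerSeries.coeff_mul] using h n
  funext n
  simpa using congrArg (PowerSeries.coeff n) (mul_right_cancel₀ hM hUV)

section RingIdentities

variable {R : Type*} [Ring R]

theorem pow_succ_sub_mul_one_sub_pow_succ (a q : R) (n : ℕ) :
    a ^ (n + 1) - (a * (1 - q)) ^ (n + 1) =
      ∑ p ∈ antidiagonal n, a ^ (p.1 + 1) * q * (a * (1 - q)) ^ p.2 := by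
  induction n with
  | zero => simp [mul_sub]
  | succ n ih =>
    have hstep : a ^ (n + 2) - (a * (1 - q)) ^ (n + 2) =
        a * (a ^ (n + 1) - (a * (1 - q)) ^ (n + 1)) + a * q * (a * (1 - q)) ^ (n + 1) := by
      rw [pow_succ' a (n + 1), pow_succ' (a * (1 - q)) (n + 1)]
      noncomm_ring
    rw [hstep, ih, Nat.sum_antidiagonal_succ, Finset.mul_sum, add_comm]
    simp only [zero_add, pow_zero, one_mul, pow_succ' a, mul_assoc]

theorem IsIdempotentElem.mul_mul_pow_succ {p : R} (hp : IsIdempotentElem p) (a : R) (n : ℕ) :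
    (p * a * p) ^ (n + 1) = p * (a * p) ^ (n + 1) := by
  induction n with
  | zero => simp [mul_assoc]
  | succ n ih =>
    rw [pow_succ', ih, pow_succ' (a * p) (n + 1), mul_assoc (p * a), ← mul_assoc p p, hp.eq]
    simp only [mul_assoc]

theorem pow_succ_sub_compress_pow_succ {q : R} (hq : IsIdempotentElem q) (a : R) (n : ℕ) :
    a ^ (n + 1) - ((1 - q) * a * (1 - q)) ^ (n + 1) =
      ∑ p ∈ antidiagonal (n + 1), a ^ p.1 * q * (a * (1 - q)) ^ p.2 := by
  rw [hq.one_sub.mul_mul_pow_succ, Nat.sum_antidiagonal_succ, pow_zero, one_mul,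
    ← pow_succ_sub_mul_one_sub_pow_succ]
  noncomm_ring

end RingIdentities

theorem Fin.prod_Ioo_zero_last_s13 {M : Type*} [CommMonoid M] {n : ℕ} (g : Fin (n + 2) → M) :
    ∏ k ∈ Ioo 0 (Fin.last (n + 1)), g k = ∏ k : Fin n, g k.succ.castSucc := by
  rw [← Fin.castSucc_zero, ← Fin.map_castSuccEmb_Ioi, prod_map, Fin.prod_Ioi_zero]
  rfl

namespace TypeBPrime

variable {B : Type*} [Ring B] [Algebra ℂ B]

theorem IsInvMK.eq_sum_antidiagonal {m t : ℕ → ℂ} (ht : IsInvMK m t) (hm : m 0 ≠ 0)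
    (c : ℕ → ℕ → ℂ) (hc : ∀ i n, ∑ p ∈ antidiagonal n, c i p.1 * m p.2 = m (i + n)) (n : ℕ) :
    t n = ∑ p ∈ antidiagonal n, c p.1 p.2 := by
  suffices t = fun n => ∑ p ∈ antidiagonal n, c p.1 p.2 from congrFun this n
  refine eq_of_sum_antidiagonal_mul_eq hm fun n => ?_
  rw [Nat.sum_antidiagonal_eq_sum_range_succ (fun j l => t j * m l), ← ht n]
  simp_rw [Finset.sum_mul]
  rw [Nat.sum_antidiagonal_sum_antidiagonal_fst n fun i k l => c i k * m l]
  simp_rw [hc]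
  rw [Finset.sum_congr rfl fun p hp => congrArg m (mem_antidiagonal.mp hp), sum_const,
    Nat.card_antidiagonal, nsmul_eq_mul]
  push_cast
  ring

theorem altWord_cons_const {R : Type*} [Ring R] {n : ℕ} (x g : R) (c : Fin (n + 1) → R) :
    altWord (Fin.cons x c : Fin (n + 2) → R) (fun _ => g) = x * g * altWord c fun _ => g := by
  simp [altWord, List.ofFn_succ, mul_assoc]

inductive IsQWord {R : Type*} [Mul R] (A : Set R) (q : R) : R → Prop
  | of {x : R} : x ∈ A → IsQWord A q x
  | cons {x y : R} : x ∈ A → IsQWord A q y → IsQWord A q (x * q * y)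

section CyclicAntimonotone

def qWordSpan (A : Set B) (q : B) : Submodule ℂ B :=
  Submodule.span ℂ {y | IsQWord A q y}

variable {A : Subalgebra ℂ B} {q : B}

theorem IsQWord.exists_altWord {y : B} :
    IsQWord A q y → ∃ (r : ℕ) (c : Fin (r + 1) → B), (∀ k, c k ∈ A) ∧ y = altWord c fun _ => q
  | .of hx => ⟨0, fun _ => _, fun _ => hx, by simp [altWord]⟩
  | .cons (x := x) hx hy => by
    obtain ⟨r, c, hc, rfl⟩ := hy.exists_altWord
    exact ⟨r + 1, Fin.cons x c, Fin.cases hx hc, (altWord_cons_const x q c).symm⟩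

theorem IsQWord.mul_left {w y : B} (hw : w ∈ A) : IsQWord A q y → IsQWord A q (w * y)
  | .of hx => .of (A.mul_mem hw hx)
  | .cons hx hy => by simpa only [mul_assoc] using IsQWord.cons (A.mul_mem hw hx) hy

theorem mul_mem_qWordSpan {g y : B} (hg : ∀ y, IsQWord A q y → IsQWord A q (g * y))
    (hy : y ∈ qWordSpan A q) : g * y ∈ qWordSpan A q := by
  induction hy using Submodule.span_induction with
  | mem y hy => exact Submodule.subset_span (hg y hy)
  | zero => simp
  | add y z _ _ hy hz => rw [mul_add]; exact add_mem hy hz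
  | smul c y _ hy => rw [mul_smul_comm]; exact Submodule.smul_mem _ c hy

theorem pow_mul_one_sub_mem_qWordSpan {a : B} (ha : a ∈ A) (k : ℕ) :
    (a * (1 - q)) ^ k ∈ qWordSpan A q := by
  induction k with
  | zero =>
    rw [pow_zero]
    exact Submodule.subset_span (.of A.one_mem)
  | succ k ih =>
    rw [pow_succ', show a * (1 - q) * (a * (1 - q)) ^ k =
      a * (a * (1 - q)) ^ k - a * q * (a * (1 - q)) ^ k by noncomm_ring]
    exact sub_mem (mul_mem_qWordSpan (fun _ h => h.mul_left ha) ih)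
      (mul_mem_qWordSpan (fun _ h => .cons ha h) ih)

variable {φ Φ : B →ₗ[ℂ] ℂ}

theorem CyclicAntimonotone.apply_mul_altWord_s13
    (hcam : CyclicAntimonotone φ Φ A {x | ∃ c : ℂ, x = c • q}) (hq : IsIdempotentElem q)
    {x : B} (hx : x ∈ A) {r : ℕ} (c : Fin (r + 1) → B) (hc : ∀ k, c k ∈ A) :
    Φ (x * q * altWord c fun _ => q) =
      φ (x * c (Fin.last r)) * (∏ k : Fin r, φ (c k.castSucc)) * Φ q := by
  rw [← altWord_cons_const, hcam (r + 1) r.succ_pos _ _ (Fin.cases hx hc)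
    (fun _ => ⟨1, (one_smul ℂ q).symm⟩), Fin.prod_Ioo_zero_last_s13, List.ofFn_const,
    List.prod_replicate, hq.pow_succ_eq]
  simp [← Fin.succ_last]

theorem CyclicAntimonotone.apply_mul_q_mul
    (hcam : CyclicAntimonotone φ Φ A {x | ∃ c : ℂ, x = c • q}) (hq : IsIdempotentElem q)
    {x y : B} (hx : x ∈ A) (hy : y ∈ A) :
    Φ (x * q * y) = φ (x * y) * Φ q := by
  simpa [altWord] using hcam.apply_mul_altWord_s13 hq hx (fun _ : Fin 1 => y) fun _ => hy

theorem CyclicAntimonotone.apply_factor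
    (hcam : CyclicAntimonotone φ Φ A {x | ∃ c : ℂ, x = c • q}) (hq : IsIdempotentElem q)
    {x z y : B} (hx : x ∈ A) (hz : z ∈ A) (hy : y ∈ qWordSpan A q) :
    Φ (x * q * (z * q * y)) = φ z * Φ (x * q * y) := by
  have hwords : Set.EqOn (Φ ∘ₗ LinearMap.mulLeft ℂ (x * q * (z * q)))
      (φ z • (Φ ∘ₗ LinearMap.mulLeft ℂ (x * q)) : B →ₗ[ℂ] ℂ) {y | IsQWord A q y} := by
    intro y hy
    obtain ⟨r, c, hc, rfl⟩ := IsQWord.exists_altWord hy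
    have h := hcam.apply_mul_altWord_s13 hq hx (Fin.cons z c) (Fin.cases hz hc)
    rw [altWord_cons_const] at h
    calc Φ (x * q * (z * q) * altWord c fun _ => q)
        = Φ (x * q * (z * q * altWord c fun _ => q)) := by simp only [mul_assoc]
      _ = φ z * (φ (x * c (Fin.last r)) * (∏ k : Fin r, φ (c k.castSucc)) * Φ q) := by
        rw [h, Fin.prod_univ_succ]
        simp [← Fin.succ_last]
        ring
      _ = φ z * Φ (x * q * altWord c fun _ => q) := by rw [hcam.apply_mul_altWord_s13 hq hx c hc]
  simpa [mul_assoc] using LinearMap.eqOn_span' hwords hy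

theorem CyclicAntimonotone.sum_antidiagonal_compress_mul_moment
    (hcam : CyclicAntimonotone φ Φ A {x | ∃ c : ℂ, x = c • q}) (hq : IsIdempotentElem q)
    (hφ1 : φ 1 = 1) {a : B} (ha : a ∈ A) (i n : ℕ) :
    ∑ p ∈ antidiagonal n, Φ (a ^ i * q * (a * (1 - q)) ^ p.1) * φ (a ^ p.2) =
      φ (a ^ (i + n)) * Φ q := by
  cases n with
  | zero => simpa [hφ1] using hcam.apply_mul_q_mul hq (pow_mem ha i) A.one_mem
  | succ n =>
    have hfactor : ∀ p ∈ antidiagonal n,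
        Φ (a ^ i * q * (a * (1 - q)) ^ p.1) * φ (a ^ (p.2 + 1)) =
          Φ (a ^ i * q * (a ^ (p.2 + 1) * q * (a * (1 - q)) ^ p.1)) := fun p _ => by
      rw [hcam.apply_factor hq (pow_mem ha i) (pow_mem ha _)
        (pow_mul_one_sub_mem_qWordSpan ha p.1), mul_comm]
    rw [Nat.sum_antidiagonal_succ', pow_zero, hφ1, mul_one, Finset.sum_congr rfl hfactor,
      ← Nat.sum_antidiagonal_swap, ← map_sum, ← map_add, ← Finset.mul_sum, ← mul_add]
    simp only [Prod.fst_swap, Prod.snd_swap]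
    rw [← pow_succ_sub_mul_one_sub_pow_succ, add_sub_cancel,
      hcam.apply_mul_q_mul hq (pow_mem ha i) (pow_mem ha _), ← pow_add]

end CyclicAntimonotone

theorem statement13_general
    {B : Type*} [Ring B] [Algebra ℂ B]
    (A : Subalgebra ℂ B) (F : Submodule ℂ B)
    (hFmulL : ∀ b : B, ∀ f ∈ F, b * f ∈ F)
    (hFmulR : ∀ b : B, ∀ f ∈ F, f * b ∈ F)
    (φ Φ φ' : B →ₗ[ℂ] ℂ)
    (hφ1 : φ 1 = 1) (hφF : ∀ f ∈ F, φ f = 0)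
    (hφ'A : ∀ a ∈ A, φ' a = 0) (hφ'F : ∀ f ∈ F, φ' f = Φ f)
    (q : B) (hqF : q ∈ F) (hq2 : q * q = q) (hΦq : Φ q = 1)
    (hcamq : CyclicAntimonotone ⇑φ ⇑Φ (A : Set B) {x | ∃ c : ℂ, x = c • q})
    (a : B) (ha : a ∈ A)
    (t : ℕ → ℂ) (ht : IsInvMK (fun n => φ (a ^ n)) t) :
    ∀ n : ℕ, 0 < n →
      φ (((1 - q) * a * (1 - q)) ^ n) = φ (a ^ n) ∧
      φ' (((1 - q) * a * (1 - q)) ^ n) = - t n := by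
  intro n hn
  obtain ⟨n, rfl⟩ := Nat.exists_eq_add_one_of_ne_zero hn.ne'
  set D := ∑ p ∈ antidiagonal (n + 1), a ^ p.1 * q * (a * (1 - q)) ^ p.2 with hD
  have hDF : D ∈ F := Submodule.sum_mem _ fun p _ => hFmulR _ _ (hFmulL _ _ hqF)
  have hcompress : ((1 - q) * a * (1 - q)) ^ (n + 1) = a ^ (n + 1) - D := by
    rw [hD, ← pow_succ_sub_compress_pow_succ hq2, sub_sub_cancel]
  have htD : t (n + 1) = Φ D := by
    rw [map_sum]
    refine ht.eq_sum_antidiagonal (by simp [hφ1]) (fun i k => Φ (a ^ i * q * (a * (1 - q)) ^ k))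
      (fun i k => ?_) (n + 1)
    simpa [hΦq] using hcamq.sum_antidiagonal_compress_mul_moment hq2 hφ1 ha i k
  refine ⟨?_, ?_⟩
  · rw [hcompress, map_sub, hφF D hDF, sub_zero]
  · rw [hcompress, map_sub, hφ'A _ (pow_mem ha _), hφ'F D hDF, htD, zero_sub]

theorem statement13
    {B : Type*} [Ring B] [Algebra ℂ B]
    (A : Subalgebra ℂ B) (F : Submodule ℂ B)
    (hFmulL : ∀ b : B, ∀ f ∈ F, b * f ∈ F)
    (hFmulR : ∀ b : B, ∀ f ∈ F, f * b ∈ F)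
    (hAF : ∀ x ∈ A, x ∈ F → x = 0)
    (hdec : ∀ x : B, ∃ a ∈ A, ∃ f ∈ F, x = a + f)
    (φ Φ φ' : B →ₗ[ℂ] ℂ)
    (hφ1 : φ 1 = 1) (hφF : ∀ f ∈ F, φ f = 0)
    (hφ'A : ∀ a ∈ A, φ' a = 0) (hφ'F : ∀ f ∈ F, φ' f = Φ f)
    (q : B) (hqF : q ∈ F) (hq2 : q * q = q) (hΦq : Φ q = 1)
    (hcamq : CyclicAntimonotone ⇑φ ⇑Φ (A : Set B) {x | ∃ c : ℂ, x = c • q})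
    (a : B) (ha : a ∈ A)
    (t : ℕ → ℂ) (ht : IsInvMK (fun n => φ (a ^ n)) t) :
    ∀ n : ℕ, 0 < n →
      φ (((1 - q) * a * (1 - q)) ^ n) = φ (a ^ n) ∧
      φ' (((1 - q) * a * (1 - q)) ^ n) = - t n :=
  statement13_general A F hFmulL hFmulR φ Φ φ' hφ1 hφF hφ'A hφ'F q hqF hq2 hΦq hcamq a ha t ht

end TypeBPrime
end
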